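/- Let G = (N, A) be a finite directed graph with source s, sink t, and nonnegative capacities, and let f be a maximum s-t flow. Form G' by adding a single arc (i,j) ∉ A with positive capacity. If the maximum flow value of G' is strictly greater than that of G, then in the residual graph D_f of f there exists a directed path from s to i and a directed path from j to t. -/

import Mathlib

/-- A capacitated directed network: `A` is the arc relation, `u` the capacities
(zero off the arc set). -/
structure FlowNetwork (V : Type*) where
  A : V → V → Prop
  u : V → V → ℝ
  cap_nonneg : ∀ i j, 0 ≤ u i j
  cap_zero : ∀ i j, ¬ A i j → u i j = 0

/-- `f` is a feasible `s`-`t` flow in `N`. -/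
structure IsFlow {V : Type*} [Fintype V] (N : FlowNetwork V) (s t : V)
    (f : V → V → ℝ) : Prop where
  nonneg : ∀ i j, 0 ≤ f i j
  le_cap : ∀ i j, f i j ≤ N.u i j
  conserve : ∀ v, v ≠ s → v ≠ t → (∑ w, f v w) = (∑ w, f w v)

/-- The value of a flow: the net flow out of the source `s`. -/
noncomputable def flowValue {V : Type*} [Fintype V] (f : V → V → ℝ) (s : V) : ℝ :=
  (∑ w, f s w) - (∑ w, f w s)

/-- `f` is a maximum `s`-`t` flow in `N`. -/
def IsMaxFlow {V : Type*} [Fintype V] (N : FlowNetwork V) (s t : V)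
    (f : V → V → ℝ) : Prop :=
  IsFlow N s t f ∧ ∀ g, IsFlow N s t g → flowValue g s ≤ flowValue f s

/-- Arc of the residual (auxiliary) graph `D_f`: a forward arc where flow is
below capacity, or a backward arc where flow is positive. -/
def ResidualArc {V : Type*} (N : FlowNetwork V) (f : V → V → ℝ) (i j : V) : Prop :=
  (N.A i j ∧ f i j < N.u i j) ∨ (N.A j i ∧ 0 < f j i)

/-- Reachability in the residual graph `D_f`. -/
def Reaches {V : Type*} (N : FlowNetwork V) (f : V → V → ℝ) (a b : V) : Prop :=
  Relation.ReflTransGen (ResidualArc N f) a b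

/-- The network obtained by adding the new arc `(i,j)` with capacity `c`. -/
def addArc {V : Type*} [DecidableEq V] (N : FlowNetwork V) (i j : V) (c : ℝ)
    (hc : 0 ≤ c) : FlowNetwork V where
  A a b := N.A a b ∨ (a = i ∧ b = j)
  u a b := if a = i ∧ b = j then c else N.u a b
  cap_nonneg a b := by
    try dsimp only
    split
    · exact hc
    · exact N.cap_nonneg a b
  cap_zero a b h := by
    try dsimp only
    rw [if_neg (fun hab => h (Or.inr hab))]
    exact N.cap_zero a b (fun hA => h (Or.inl hA))

/-- The network obtained by simultaneously adding the arcs of `I`, arc `a ∈ I`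
getting capacity `c a`. -/
def addArcs {V : Type*} [DecidableEq V] (N : FlowNetwork V) (I : Finset (V × V))
    (c : V × V → ℝ) (hc : ∀ a ∈ I, 0 ≤ c a) : FlowNetwork V where
  A a b := N.A a b ∨ (a, b) ∈ I
  u a b := if (a, b) ∈ I then c (a, b) else N.u a b
  cap_nonneg a b := by
    try dsimp only
    split
    · next h => exact hc _ h
    · exact N.cap_nonneg a b
  cap_zero a b h := by
    try dsimp only
    rw [if_neg (fun hab => h (Or.inr hab))]
    exact N.cap_zero a b (fun hA => h (Or.inl hA))

/-!
If `i` is not reachable from `s` in `D_f`, the set `S` of nodes reachable from `s` is closed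
under residual arcs, so `f` saturates every arc leaving `S` and empties every arc entering it:
the value of `f` equals the capacity of the cut `S`. Since `f` is maximum, `t ∉ S` (a residual
`s`-`t` path would give a better flow by pushing a small `ε` along it). The new arc does not
leave `S`, so `S` has the same capacity in `G'`, and that capacity bounds the value of every
flow of `G'`. The case where `t` is not reachable from `j` is the same with `S` the set of nodes
from which `t` is not reachable.
-/

open Finset Filter Topology

section FlowValue

variable {V : Type*} [Fintype V]

lemma flowValue_add (g h : V → V → ℝ) (x : V) :
    flowValue (g + h) x = flowValue g x + flowValue h x := by
  simp only [flowValue, Pi.add_apply, sum_add_distrib]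
  ring

lemma flowValue_sub (g h : V → V → ℝ) (x : V) :
    flowValue (g - h) x = flowValue g x - flowValue h x := by
  simp only [flowValue, Pi.sub_apply, sum_sub_distrib]
  ring

lemma flowValue_smul (ε : ℝ) (h : V → V → ℝ) (x : V) :
    flowValue (ε • h) x = ε * flowValue h x := by
  simp only [flowValue, Pi.smul_apply, smul_eq_mul, ← mul_sum, mul_sub]

lemma IsFlow.flowValue_eq_zero {N : FlowNetwork V} {s t : V} {f : V → V → ℝ}
    (hf : IsFlow N s t f) {v : V} (hvs : v ≠ s) (hvt : v ≠ t) : flowValue f v = 0 :=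
  sub_eq_zero.2 (hf.conserve v hvs hvt)

def arcIndicator [DecidableEq V] (a b : V) : V → V → ℝ :=
  fun x y => if x = a ∧ y = b then 1 else 0

lemma flowValue_arcIndicator [DecidableEq V] (a b x : V) :
    flowValue (arcIndicator a b) x = (if x = a then 1 else 0) - (if x = b then 1 else 0) := by
  simp [flowValue, arcIndicator, ite_and]

end FlowValue

section Directions

variable {V : Type*}

/-- `f + ε • h` stays feasible for all small `ε > 0`. -/
def IsFeasibleDirection (N : FlowNetwork V) (f h : V → V → ℝ) : Prop :=
  ∀ a b, (0 < h a b → f a b < N.u a b) ∧ (h a b < 0 → 0 < f a b)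

/-- The direction is the sum of the arc indicators along the path, backward arcs counted
negatively; arcs traversed repeatedly are harmless, since only the signs of `h` are constrained. -/
lemma exists_isFeasibleDirection_of_reaches [Fintype V] [DecidableEq V] {N : FlowNetwork V}
    {f : V → V → ℝ} {v w : V} (hvw : Reaches N f v w) :
    ∃ h, IsFeasibleDirection N f h ∧
      ∀ x, flowValue h x = (if x = v then 1 else 0) - (if x = w then 1 else 0) := by
  induction hvw using Relation.ReflTransGen.head_induction_on with
  | refl => exact ⟨0, fun a b => by simp, fun x => by simp [flowValue]⟩
  | @head a b hab _ ih =>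
    obtain ⟨h, hdir, hval⟩ := ih
    rcases hab with ⟨-, hslack⟩ | ⟨-, hpos⟩
    · refine ⟨h + arcIndicator a b, fun x y => ?_, fun x => ?_⟩
      · by_cases hxy : x = a ∧ y = b
        · obtain ⟨rfl, rfl⟩ := hxy
          simp only [Pi.add_apply, arcIndicator, and_self, if_true]
          exact ⟨fun _ => hslack, fun hneg => (hdir x y).2 (by linarith)⟩
        · simpa [arcIndicator, hxy] using hdir x y
      · rw [flowValue_add, hval, flowValue_arcIndicator]
        ring
    · refine ⟨h - arcIndicator b a, fun x y => ?_, fun x => ?_⟩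
      · by_cases hxy : x = b ∧ y = a
        · obtain ⟨rfl, rfl⟩ := hxy
          simp only [Pi.sub_apply, arcIndicator, and_self, if_true]
          exact ⟨fun hp => (hdir x y).1 (by linarith), fun _ => hpos⟩
        · simpa [arcIndicator, hxy] using hdir x y
      · rw [flowValue_sub, hval, flowValue_arcIndicator]
        ring

lemma IsFeasibleDirection.eventually_nonneg_le_cap {N : FlowNetwork V} {f h : V → V → ℝ}
    (hdir : IsFeasibleDirection N f h) {a b : V} (hnn : 0 ≤ f a b) (hcap : f a b ≤ N.u a b) :
    ∀ᶠ ε in 𝓝[>] (0 : ℝ), 0 ≤ f a b + ε * h a b ∧ f a b + ε * h a b ≤ N.u a b := by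
  have hlim : Tendsto (fun ε : ℝ => f a b + ε * h a b) (𝓝[>] 0) (𝓝 (f a b)) :=
    ((continuous_const.add (continuous_id.mul continuous_const)).tendsto' 0 _ (by simp)).mono_left
      nhdsWithin_le_nhds
  rcases lt_trichotomy (h a b) 0 with hneg | hzero | hpos
  · filter_upwards [hlim.eventually_const_le ((hdir a b).2 hneg), self_mem_nhdsWithin]
      with ε hlow (hε : 0 < ε)
    exact ⟨hlow, by nlinarith⟩
  · exact Eventually.of_forall fun ε => by simp [hzero, hnn, hcap]
  · filter_upwards [hlim.eventually_le_const ((hdir a b).1 hpos), self_mem_nhdsWithin]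
      with ε hup (hε : 0 < ε)
    exact ⟨by positivity, hup⟩

end Directions

section Flows

variable {V : Type*} [Fintype V] {N : FlowNetwork V} {s t : V} {f : V → V → ℝ}

lemma IsFlow.eventually_isFlow_add_smul (hf : IsFlow N s t f) {h : V → V → ℝ}
    (hdir : IsFeasibleDirection N f h) (hcons : ∀ v, v ≠ s → v ≠ t → flowValue h v = 0) :
    ∀ᶠ ε in 𝓝[>] (0 : ℝ), IsFlow N s t (f + ε • h) := by
  have hbounds := eventually_all.2 fun a => eventually_all.2 fun b =>
    hdir.eventually_nonneg_le_cap (hf.nonneg a b) (hf.le_cap a b)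
  filter_upwards [hbounds] with ε hε
  refine ⟨fun a b => (hε a b).1, fun a b => (hε a b).2, fun v hvs hvt => ?_⟩
  rw [← sub_eq_zero]
  change flowValue (f + ε • h) v = 0
  rw [flowValue_add, flowValue_smul, hf.flowValue_eq_zero hvs hvt, hcons v hvs hvt, mul_zero,
    add_zero]

lemma IsFlow.exists_flowValue_lt_of_reaches [DecidableEq V] (hf : IsFlow N s t f) (hst : s ≠ t)
    (hr : Reaches N f s t) : ∃ g, IsFlow N s t g ∧ flowValue f s < flowValue g s := by
  obtain ⟨h, hdir, hval⟩ := exists_isFeasibleDirection_of_reaches hr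
  have hcons : ∀ v, v ≠ s → v ≠ t → flowValue h v = 0 := fun v hvs hvt => by
    simp [hval, hvs, hvt]
  obtain ⟨ε, hflow, hε⟩ :=
    ((hf.eventually_isFlow_add_smul hdir hcons).and self_mem_nhdsWithin).exists
  refine ⟨f + ε • h, hflow, ?_⟩
  rw [flowValue_add, flowValue_smul, hval, if_pos rfl, if_neg hst]
  have : (0 : ℝ) < ε := hε
  linarith

lemma IsMaxFlow.not_reaches [DecidableEq V] (hf : IsMaxFlow N s t f) (hst : s ≠ t) :
    ¬ Reaches N f s t := fun hr => by
  obtain ⟨g, hg, hlt⟩ := hf.1.exists_flowValue_lt_of_reaches hst hr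
  exact (hf.2 g hg).not_gt hlt

lemma IsFlow.saturated_of_not_residualArc (hf : IsFlow N s t f) {v w : V}
    (h : ¬ ResidualArc N f v w) : f v w = N.u v w ∧ f w v = 0 := by
  simp only [ResidualArc, not_or, not_and, not_lt] at h
  constructor
  · by_cases hA : N.A v w
    · exact le_antisymm (hf.le_cap v w) (h.1 hA)
    · linarith [N.cap_zero v w hA, hf.nonneg v w, hf.le_cap v w]
  · by_cases hA : N.A w v
    · exact le_antisymm (h.2 hA) (hf.nonneg w v)
    · linarith [N.cap_zero w v hA, hf.nonneg w v, hf.le_cap w v]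

end Flows

section ResidualClosed

variable {V : Type*} [Fintype V]

def IsResidualClosed (N : FlowNetwork V) (f : V → V → ℝ) (S : Finset V) : Prop :=
  ∀ v ∈ S, ∀ w, ResidualArc N f v w → w ∈ S

open Classical in
lemma isResidualClosed_reaches_from (N : FlowNetwork V) (f : V → V → ℝ) (s : V) :
    IsResidualClosed N f {v | Reaches N f s v} := by
  intro v hv w hvw
  simp only [mem_filter, mem_univ, true_and] at hv ⊢
  exact hv.tail hvw

open Classical in
lemma isResidualClosed_not_reaches_to (N : FlowNetwork V) (f : V → V → ℝ) (t : V) :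
    IsResidualClosed N f {v | ¬ Reaches N f v t} := by
  intro v hv w hvw
  simp only [mem_filter, mem_univ, true_and] at hv ⊢
  exact fun hwt => hv (.head hvw hwt)

end ResidualClosed

section Cuts

variable {V : Type*} [Fintype V] [DecidableEq V] {N : FlowNetwork V} {s t : V} {f : V → V → ℝ}

def cutCapacity (N : FlowNetwork V) (S : Finset V) : ℝ :=
  ∑ v ∈ S, ∑ w ∈ Sᶜ, N.u v w

lemma IsFlow.flowValue_eq_sum_cut (hf : IsFlow N s t f) {S : Finset V} (hs : s ∈ S)
    (ht : t ∉ S) : flowValue f s = ∑ v ∈ S, ∑ w ∈ Sᶜ, (f v w - f w v) := by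
  have hsum : flowValue f s = ∑ v ∈ S, flowValue f v := by
    refine (sum_eq_single_of_mem s hs fun v hv hvs => ?_).symm
    exact hf.flowValue_eq_zero hvs (ne_of_mem_of_not_mem hv ht)
  have hinner : ∑ v ∈ S, ∑ w ∈ S, (f v w - f w v) = 0 := by
    simp only [sum_sub_distrib]
    rw [sum_comm, sub_self]
  calc flowValue f s
      = ∑ v ∈ S, (∑ w ∈ S, (f v w - f w v) + ∑ w ∈ Sᶜ, (f v w - f w v)) := by
        rw [hsum]
        exact sum_congr rfl fun v _ => by rw [sum_add_sum_compl, flowValue, sum_sub_distrib]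
    _ = ∑ v ∈ S, ∑ w ∈ Sᶜ, (f v w - f w v) := by rw [sum_add_distrib, hinner, zero_add]

lemma IsFlow.flowValue_le_cutCapacity (hf : IsFlow N s t f) {S : Finset V} (hs : s ∈ S)
    (ht : t ∉ S) : flowValue f s ≤ cutCapacity N S := by
  rw [hf.flowValue_eq_sum_cut hs ht, cutCapacity]
  gcongr with v _ w _
  linarith [hf.le_cap v w, hf.nonneg w v]

lemma IsFlow.flowValue_eq_cutCapacity (hf : IsFlow N s t f) {S : Finset V} (hs : s ∈ S)
    (ht : t ∉ S) (hS : IsResidualClosed N f S) : flowValue f s = cutCapacity N S := by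
  rw [hf.flowValue_eq_sum_cut hs ht, cutCapacity]
  refine sum_congr rfl fun v hv => sum_congr rfl fun w hw => ?_
  obtain ⟨hvw, hwv⟩ := hf.saturated_of_not_residualArc fun h => mem_compl.1 hw (hS v hv w h)
  rw [hvw, hwv, sub_zero]

lemma cutCapacity_addArc (N : FlowNetwork V) {i j : V} {c : ℝ} (hc : 0 ≤ c) {S : Finset V}
    (hij : ¬ (i ∈ S ∧ j ∉ S)) : cutCapacity (addArc N i j c hc) S = cutCapacity N S := by
  refine sum_congr rfl fun v hv => sum_congr rfl fun w hw => ?_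
  refine if_neg ?_
  rintro ⟨rfl, rfl⟩
  exact hij ⟨hv, mem_compl.1 hw⟩

end Cuts

theorem stmt10_general {V : Type*} [Fintype V] [DecidableEq V]
    (N : FlowNetwork V) (s t : V) (hst : s ≠ t)
    (f : V → V → ℝ) (hf : IsMaxFlow N s t f)
    (i j : V) (c : ℝ) (hc : 0 < c)
    (f' : V → V → ℝ) (hf' : IsMaxFlow (addArc N i j c hc.le) s t f')
    (hgt : flowValue f s < flowValue f' s) :
    Reaches N f s i ∧ Reaches N f j t := by
  classical
  have hnst := hf.not_reaches hst
  have hcrosses (S : Finset V) (hs : s ∈ S) (ht : t ∉ S) (hS : IsResidualClosed N f S) :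
      i ∈ S ∧ j ∉ S := by
    by_contra hij
    have := calc flowValue f' s
        ≤ cutCapacity (addArc N i j c hc.le) S := hf'.1.flowValue_le_cutCapacity hs ht
      _ = cutCapacity N S := cutCapacity_addArc N hc.le hij
      _ = flowValue f s := (hf.1.flowValue_eq_cutCapacity hs ht hS).symm
    linarith
  refine ⟨?_, ?_⟩
  · simpa using (hcrosses _ (by simpa using .refl) (by simpa using hnst)
      (isResidualClosed_reaches_from N f s)).1
  · simpa using (hcrosses _ (by simpa using hnst) (by simpa using .refl)
      (isResidualClosed_not_reaches_to N f t)).2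

/-- if adding the single new arc `(i,j)` with positive capacity
strictly increases the maximum flow value, then in the residual graph of the
original maximum flow `f` the node `i` is reachable from `s` and `t` is
reachable from `j`. -/
theorem stmt10 {V : Type*} [Fintype V] [DecidableEq V]
    (N : FlowNetwork V) (s t : V) (hst : s ≠ t)
    (f : V → V → ℝ) (hf : IsMaxFlow N s t f)
    (i j : V) (hij : ¬ N.A i j) (c : ℝ) (hc : 0 < c)
    (f' : V → V → ℝ) (hf' : IsMaxFlow (addArc N i j c hc.le) s t f')
    (hgt : flowValue f s < flowValue f' s) :
    Reaches N f s i ∧ Reaches N f j t :=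
  stmt10_general N s t hst f hf i j c hc f' hf' hgt
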